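/- arXiv:1211.2716 — 8 statements merged into one kernel-verified Lean document; each statement's English description precedes it below -/
import Mathlib

section
/- The number of n×n integer matrices in lower Hermite normal form with determinant k > 0 equals the sum over all tuples (d_1,...,d_n) of positive integers with d_1···d_n = k of the product d_1^0 · d_2^1 ··· d_n^{n-1}. -/
/-!
A matrix in Hermite normal form is lower triangular, so its determinant is the product of its
diagonal entries `d i`. Given the diagonal, the `i` entries of row `i` left of the diagonal are
free in `[0, d i)`, so exactly `∏ i, d i ^ i` matrices in Hermite normal form have diagonal `d`.
-/

open Finset

/-- C is a lower triangular matrix in (lower) Hermite normal form. -/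
def IsHermiteNF {n : ℕ} (C : Matrix (Fin n) (Fin n) ℤ) : Prop :=
  (∀ i j : Fin n, i < j → C i j = 0) ∧
  (∀ i : Fin n, 0 < C i i) ∧
  (∀ i j : Fin n, j < i → 0 ≤ C i j ∧ C i j < C i i)

lemma Fin.exists_castLE_eq_of_lt {n : ℕ} {i j : Fin n} (h : j < i) :
    ∃ j' : Fin i, Fin.castLE Fin.is_le' j' = j :=
  ⟨⟨j, h⟩, rfl⟩

namespace Matrix

variable {n : ℕ}

def hermiteMatrix (d : Fin n → ℕ) (c : ∀ i : Fin n, Fin i → Fin (d i)) :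
    Matrix (Fin n) (Fin n) ℤ :=
  of fun i j => if h : j < i then (c i ⟨j, h⟩ : ℤ) else if i = j then d i else 0

variable (d : Fin n → ℕ) (c : ∀ i : Fin n, Fin i → Fin (d i))

@[simp]
lemma hermiteMatrix_apply_self (i : Fin n) : hermiteMatrix d c i i = d i := by
  simp [hermiteMatrix]

lemma hermiteMatrix_apply_castLE (i : Fin n) (j : Fin i) :
    hermiteMatrix d c i (Fin.castLE Fin.is_le' j) = c i j :=
  dif_pos j.isLt

lemma hermiteMatrix_apply_of_lt {i j : Fin n} (h : i < j) : hermiteMatrix d c i j = 0 := by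
  simp [hermiteMatrix, h.not_gt, h.ne]

lemma isLowerTriangular_hermiteMatrix : (hermiteMatrix d c).IsLowerTriangular :=
  fun _ _ h => hermiteMatrix_apply_of_lt d c h

lemma det_hermiteMatrix : (hermiteMatrix d c).det = ∏ i, (d i : ℤ) := by
  simp [det_of_isLowerTriangular _ (isLowerTriangular_hermiteMatrix d c)]

lemma isHermiteNF_hermiteMatrix_iff : IsHermiteNF (hermiteMatrix d c) ↔ ∀ i, 0 < d i := by
  refine ⟨fun hC i => by simpa using hC.2.1 i, fun hd => ?_⟩
  refine ⟨fun i j h => hermiteMatrix_apply_of_lt d c h, fun i => by simpa using hd i,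
    fun i j h => ?_⟩
  obtain ⟨j, rfl⟩ := Fin.exists_castLE_eq_of_lt h
  simp [hermiteMatrix_apply_castLE]

lemma hermiteMatrix_injective :
    Function.Injective fun p : Σ d : Fin n → ℕ, ∀ i : Fin n, Fin i → Fin (d i) =>
      hermiteMatrix p.1 p.2 := by
  rintro ⟨d, c⟩ ⟨d', c'⟩ h
  obtain rfl : d = d' := funext fun i => by
    simpa using congrFun (congrFun h i) i
  congr 1
  funext i j
  exact Fin.ext <| by
    simpa [hermiteMatrix_apply_castLE] using congrFun (congrFun h i) (Fin.castLE Fin.is_le' j)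

end Matrix

open Matrix

lemma IsHermiteNF.exists_hermiteMatrix_eq {n : ℕ} {C : Matrix (Fin n) (Fin n) ℤ}
    (hC : IsHermiteNF C) : ∃ d c, hermiteMatrix d c = C := by
  obtain ⟨hupper, hdiag, hlower⟩ := hC
  refine ⟨fun i => (C i i).toNat,
    fun i j => ⟨(C i (Fin.castLE Fin.is_le' j)).toNat, by
      have := hlower i (Fin.castLE Fin.is_le' j) j.isLt
      show _ < (C i i).toNat
      omega⟩, ?_⟩
  ext i j
  rcases lt_trichotomy j i with h | rfl | h
  · obtain ⟨j, rfl⟩ := Fin.exists_castLE_eq_of_lt h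
    simp [hermiteMatrix_apply_castLE, (hlower i _ h).1]
  · simp [(hdiag j).le]
  · simp [hermiteMatrix_apply_of_lt _ _ h, hupper i j h]

lemma Finset.mem_filter_piFinset_divisors_iff {ι : Type*} [Fintype ι] [DecidableEq ι] {k : ℕ}
    {d : ι → ℕ} :
    d ∈ (Fintype.piFinset fun _ : ι => k.divisors).filter (fun d => ∏ i, d i = k) ↔
      ∏ i, d i = k ∧ ∀ i, 0 < d i := by
  simp only [mem_filter, Fintype.mem_piFinset]
  constructor
  · rintro ⟨hdvd, hprod⟩
    exact ⟨hprod, fun i => Nat.pos_of_mem_divisors (hdvd i)⟩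
  · rintro ⟨hprod, hpos⟩
    have hk : k ≠ 0 := hprod ▸ prod_ne_zero_iff.mpr fun i _ => (hpos i).ne'
    exact ⟨fun i => Nat.mem_divisors.mpr ⟨hprod ▸ dvd_prod_of_mem d (mem_univ i), hk⟩, hprod⟩

theorem count_hnf_general (n k : ℕ) :
    {C : Matrix (Fin n) (Fin n) ℤ | IsHermiteNF C ∧ C.det = (k : ℤ)}.ncard =
      ∑ d ∈ ((Fintype.piFinset fun _ : Fin n => k.divisors).filter fun d => ∏ i, d i = k),
        ∏ i : Fin n, d i ^ (i : ℕ) := by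
  set D := (Fintype.piFinset fun _ : Fin n => k.divisors).filter fun d => ∏ i, d i = k
  let f (p : Σ d : D, ∀ i : Fin n, Fin i → Fin (d.1 i)) := hermiteMatrix p.1.1 p.2
  have hf : Function.Injective f :=
    hermiteMatrix_injective.comp (Subtype.val_injective.sigma_map fun _ => Function.injective_id)
  have hS : {C | IsHermiteNF C ∧ C.det = k} = Set.range f := by
    ext C
    constructor
    · rintro ⟨hC, hdet⟩
      obtain ⟨d, c, rfl⟩ := hC.exists_hermiteMatrix_eq
      have hprod : ∏ i, d i = k := by exact_mod_cast (det_hermiteMatrix d c).symm.trans hdet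
      have hpos := (isHermiteNF_hermiteMatrix_iff d c).mp hC
      exact ⟨⟨⟨d, mem_filter_piFinset_divisors_iff.mpr ⟨hprod, hpos⟩⟩, c⟩, rfl⟩
    · rintro ⟨⟨⟨d, hd⟩, c⟩, rfl⟩
      obtain ⟨hprod, hpos⟩ := mem_filter_piFinset_divisors_iff.mp hd
      exact ⟨(isHermiteNF_hermiteMatrix_iff d c).mpr hpos, by simp [f, det_hermiteMatrix, ← hprod]⟩
  rw [hS, Set.ncard_range_of_injective hf, Nat.card_eq_fintype_card, Fintype.card_sigma,
    ← sum_coe_sort D]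
  simp [Fintype.card_pi]

theorem count_hnf (n k : ℕ) (hn : 1 ≤ n) (hk : 0 < k) :
    {C : Matrix (Fin n) (Fin n) ℤ | IsHermiteNF C ∧ C.det = (k : ℤ)}.ncard =
      ∑ d ∈ ((Fintype.piFinset fun _ : Fin n => k.divisors).filter fun d => ∏ i, d i = k),
        ∏ i : Fin n, d i ^ (i : ℕ) :=
  count_hnf_general n k
end

section
/- The number of n×n integer matrices in Hermite normal form with determinant k > 0 and all row vectors primitive equals the sum over all tuples (d_1,...,d_n) of positive integers with d_1···d_n = k of the product over i = 1,...,n of (sum over divisors g of d_i of μ(g)(d_i/g)^{i-1}). -/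
open Finset ArithmeticFunction

/-- The set of n-tuples of positive integers with product k. -/
def tuples (n k : ℕ) : Finset (Fin n → ℕ) :=
  (Fintype.piFinset fun _ => k.divisors).filter fun d => ∏ i, d i = k

/-- a_n(k) = Σ_{d_1⋯d_n = k} d_1^0 d_2^1 ⋯ d_n^{n-1}. -/
def an (n k : ℕ) : ℕ := ∑ d ∈ tuples n k, ∏ i : Fin n, d i ^ (i : ℕ)

/-- a_n'(k) = Σ_{d_1⋯d_n = k} Π_i Σ_{g ∣ d_i} μ(g) (d_i/g)^{i-1}. -/
def an' (n k : ℕ) : ℤ :=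
  ∑ d ∈ tuples n k, ∏ i : Fin n,
    ∑ g ∈ (d i).divisors, moebius g * ((d i / g : ℕ) : ℤ) ^ (i : ℕ)


/-! Sorting the matrices by their diagonal `d`, whose product is the determinant `k`, an HNF
matrix is an independent choice of rows: the `i`-th row ranges over the box
`[0, dᵢ)^(i-1) × {dᵢ} × {0}^(n-i)`. Primitive rows in such a box are counted by Möbius inversion
over the divisors `g` of `dᵢ`, since the rows all of whose entries are divisible by `g` form a
sub-box with `(dᵢ / g)^(i-1)` points. -/

lemma sum_divisors_moebius (m : ℕ) :
    ∑ g ∈ m.divisors, (moebius g : ℤ) = if m = 1 then 1 else 0 := by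
  simpa only [coe_mul_zeta_apply, one_apply] using congrArg (· m) moebius_mul_coe_zeta

lemma card_filter_gcd_natAbs_eq_one {ι : Type*} [Fintype ι] [DecidableEq ι]
    (B : ι → Finset ℤ) {D : ℕ} (hD : D ≠ 0)
    (hB : ∀ r ∈ Fintype.piFinset B, univ.gcd (fun j => (r j).natAbs) ∣ D) :
    (#{r ∈ Fintype.piFinset B | univ.gcd (fun j => (r j).natAbs) = 1} : ℤ) =
      ∑ g ∈ D.divisors, moebius g * ∏ j, (#{x ∈ B j | (g : ℤ) ∣ x} : ℤ) := by
  have indicator : ∀ r ∈ Fintype.piFinset B,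
      (if univ.gcd (fun j => (r j).natAbs) = 1 then 1 else 0 : ℤ) =
        ∑ g ∈ D.divisors, if g ∣ univ.gcd (fun j => (r j).natAbs) then (moebius g : ℤ) else 0 := by
    intro r hr
    rw [← sum_filter, Nat.divisors_filter_dvd_of_dvd hD (hB r hr), sum_divisors_moebius]
  have multiples (g : ℕ) : #{r ∈ Fintype.piFinset B | g ∣ univ.gcd (fun j => (r j).natAbs)} =
      ∏ j, #{x ∈ B j | (g : ℤ) ∣ x} := by
    rw [← Fintype.card_piFinset]
    congr 1
    ext r
    simp only [mem_filter, Fintype.mem_piFinset, Finset.dvd_gcd_iff, mem_univ, true_implies,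
      Int.natCast_dvd, forall_and]
  rw [card_filter, Nat.cast_sum, sum_congr rfl fun r hr => by push_cast; exact indicator r hr,
    sum_comm]
  refine sum_congr rfl fun g _ => ?_
  rw [← sum_filter, sum_const, multiples, nsmul_eq_mul, Nat.cast_prod, mul_comm]

lemma card_filter_dvd_Ico_zero {g D : ℕ} (hg : 0 < g) (hgD : g ∣ D) :
    #{x ∈ Ico (0 : ℤ) D | (g : ℤ) ∣ x} = D / g := by
  have := Int.Ico_filter_dvd_card 0 D (r := g) (by exact_mod_cast hg)
  rw [Int.cast_natCast, Int.cast_natCast, ← Nat.cast_div hgD (by positivity)] at this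
  simp only [Int.cast_zero, zero_div, Int.ceil_zero, sub_zero, Int.ceil_natCast] at this
  rw [max_eq_left (by positivity)] at this
  exact_mod_cast this

noncomputable def hnfRowBox {n : ℕ} (i : Fin n) (D : ℕ) : Fin n → Finset ℤ :=
  fun j => if j < i then Ico 0 D else if j = i then {(D : ℤ)} else {0}

lemma mem_piFinset_hnfRowBox {n : ℕ} {i : Fin n} {D : ℕ} {r : Fin n → ℤ} :
    r ∈ Fintype.piFinset (hnfRowBox i D) ↔
      (∀ j < i, 0 ≤ r j ∧ r j < D) ∧ r i = D ∧ ∀ j, i < j → r j = 0 := by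
  simp only [Fintype.mem_piFinset, hnfRowBox]
  constructor
  · intro h
    exact ⟨fun j hj => by simpa [hj] using h j, by simpa using h i,
      fun j hj => by simpa [hj.not_gt, hj.ne'] using h j⟩
  · rintro ⟨hlt, hdiag, hgt⟩ j
    rcases lt_trichotomy j i with hj | rfl | hj
    · simpa [hj] using hlt j hj
    · simpa using hdiag
    · simpa [hj.not_gt, hj.ne'] using hgt j hj

lemma card_filter_dvd_hnfRowBox {n : ℕ} (i j : Fin n) {g D : ℕ} (hg : 0 < g) (hgD : g ∣ D) :
    #{x ∈ hnfRowBox i D j | (g : ℤ) ∣ x} = if j < i then D / g else 1 := by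
  unfold hnfRowBox
  split_ifs
  · exact card_filter_dvd_Ico_zero hg hgD
  · simp [filter_singleton, Int.natCast_dvd_natCast.mpr hgD]
  · simp [filter_singleton]

noncomputable def primitiveHNFRows {n : ℕ} (i : Fin n) (D : ℕ) : Finset (Fin n → ℤ) :=
  {r ∈ Fintype.piFinset (hnfRowBox i D) | univ.gcd (fun j => (r j).natAbs) = 1}

lemma card_primitiveHNFRows {n : ℕ} (i : Fin n) {D : ℕ} (hD : 0 < D) :
    (#(primitiveHNFRows i D) : ℤ) = ∑ g ∈ D.divisors, moebius g * ((D / g : ℕ) : ℤ) ^ (i : ℕ) := by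
  have gcd_dvd (r) (hr : r ∈ Fintype.piFinset (hnfRowBox i D)) :
      univ.gcd (fun j => (r j).natAbs) ∣ D := by
    simpa [(mem_piFinset_hnfRowBox.mp hr).2.1] using
      gcd_dvd (mem_univ i) (f := fun j => (r j).natAbs)
  rw [primitiveHNFRows, card_filter_gcd_natAbs_eq_one _ hD.ne' gcd_dvd]
  refine sum_congr rfl fun g hg => ?_
  have hg0 := Nat.pos_of_mem_divisors hg
  simp only [card_filter_dvd_hnfRowBox i _ hg0 (Nat.dvd_of_mem_divisors hg), Nat.cast_ite,
    prod_ite, prod_const, filter_gt_eq_Iio, Fin.card_Iio]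
  simp

lemma mem_tuples {n k : ℕ} {d : Fin n → ℕ} : d ∈ tuples n k ↔ ∏ i, d i = k ∧ k ≠ 0 := by
  simp only [tuples, mem_filter, Fintype.mem_piFinset, Nat.mem_divisors]
  constructor
  · rintro ⟨hdiv, hprod⟩
    refine ⟨hprod, fun hk => ?_⟩
    obtain ⟨i, -, -⟩ := prod_eq_zero_iff.mp (hprod.trans hk)
    exact (hdiv i).2 hk
  · rintro ⟨hprod, hk⟩
    exact ⟨fun i => ⟨hprod ▸ dvd_prod_of_mem d (mem_univ i), hk⟩, hprod⟩

lemma pos_of_mem_tuples {n k : ℕ} {d : Fin n → ℕ} (hd : d ∈ tuples n k) (i : Fin n) : 0 < d i := by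
  obtain ⟨hprod, hk⟩ := mem_tuples.mp hd
  exact Nat.pos_of_ne_zero (prod_ne_zero_iff.mp (hprod ▸ hk) i (mem_univ i))

lemma IsHermiteNF.det_eq_prod_diag {n : ℕ} {C : Matrix (Fin n) (Fin n) ℤ} (h : IsHermiteNF C) :
    C.det = ∏ i, C i i :=
  C.det_of_isLowerTriangular fun i j hij => h.1 i j hij

noncomputable def primitiveHNFWithDiag {n : ℕ} (d : Fin n → ℕ) :
    Finset (Matrix (Fin n) (Fin n) ℤ) :=
  Fintype.piFinset fun i => primitiveHNFRows i (d i)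

lemma mem_primitiveHNFWithDiag {n : ℕ} {d : Fin n → ℕ} (hd : ∀ i, 0 < d i)
    {C : Matrix (Fin n) (Fin n) ℤ} :
    C ∈ primitiveHNFWithDiag d ↔
      IsHermiteNF C ∧ (∀ i, C i i = d i) ∧ ∀ i, univ.gcd (fun j => (C i j).natAbs) = 1 := by
  refine Fintype.mem_piFinset.trans ?_
  simp only [primitiveHNFRows, mem_filter, mem_piFinset_hnfRowBox]
  constructor
  · intro h
    refine ⟨⟨fun i j hij => (h i).1.2.2 j hij, fun i => ?_, fun i j hji => ?_⟩,
      fun i => (h i).1.2.1, fun i => (h i).2⟩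
    · rw [(h i).1.2.1]
      exact_mod_cast hd i
    · rw [(h i).1.2.1]
      exact (h i).1.1 j hji
  · rintro ⟨⟨upper, -, lower⟩, diag, primitive⟩ i
    exact ⟨⟨fun j hj => diag i ▸ lower i j hj, diag i, upper i⟩, primitive i⟩

lemma card_primitiveHNFWithDiag {n : ℕ} {d : Fin n → ℕ} (hd : ∀ i, 0 < d i) :
    (#(primitiveHNFWithDiag d) : ℤ) =
      ∏ i : Fin n, ∑ g ∈ (d i).divisors, moebius g * ((d i / g : ℕ) : ℤ) ^ (i : ℕ) := by
  calc (#(primitiveHNFWithDiag d) : ℤ) = ∏ i, (#(primitiveHNFRows i (d i)) : ℤ) := by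
        exact_mod_cast Fintype.card_piFinset _
    _ = _ := prod_congr rfl fun i _ => card_primitiveHNFRows i (hd i)

noncomputable def primitiveHNF (n k : ℕ) : Finset (Matrix (Fin n) (Fin n) ℤ) :=
  (tuples n k).biUnion primitiveHNFWithDiag

lemma mem_primitiveHNF {n k : ℕ} {C : Matrix (Fin n) (Fin n) ℤ} :
    C ∈ primitiveHNF n k ↔
      IsHermiteNF C ∧ C.det = k ∧ ∀ i, univ.gcd (fun j => (C i j).natAbs) = 1 := by
  rw [primitiveHNF, mem_biUnion]
  constructor
  · rintro ⟨d, hd, hC⟩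
    obtain ⟨hnf, diag, primitive⟩ := (mem_primitiveHNFWithDiag (pos_of_mem_tuples hd)).mp hC
    refine ⟨hnf, ?_, primitive⟩
    rw [hnf.det_eq_prod_diag, ← (mem_tuples.mp hd).1]
    simp [diag]
  · rintro ⟨hnf, hdet, primitive⟩
    set d : Fin n → ℕ := fun i => (C i i).toNat
    have diag (i : Fin n) : C i i = d i := (Int.toNat_of_nonneg (hnf.2.1 i).le).symm
    have hd (i : Fin n) : 0 < d i := by simpa [d] using hnf.2.1 i
    have hprod : ∏ i, d i = k := by
      have : ∏ i, C i i = k := hnf.det_eq_prod_diag ▸ hdet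
      simp only [diag] at this
      exact_mod_cast this
    have hk : k ≠ 0 := hprod ▸ prod_ne_zero_iff.mpr fun i _ => (hd i).ne'
    exact ⟨d, mem_tuples.mpr ⟨hprod, hk⟩, (mem_primitiveHNFWithDiag hd).mpr ⟨hnf, diag, primitive⟩⟩

lemma card_primitiveHNF (n k : ℕ) : (#(primitiveHNF n k) : ℤ) = an' n k := by
  have disjoint : (tuples n k : Set (Fin n → ℕ)).PairwiseDisjoint primitiveHNFWithDiag := by
    intro d hd e he hde
    refine disjoint_left.mpr fun C hCd hCe => hde (funext fun i => ?_)
    have diag_d := ((mem_primitiveHNFWithDiag (pos_of_mem_tuples hd)).mp hCd).2.1 i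
    have diag_e := ((mem_primitiveHNFWithDiag (pos_of_mem_tuples he)).mp hCe).2.1 i
    exact_mod_cast diag_d.symm.trans diag_e
  rw [primitiveHNF, card_biUnion disjoint, an', Nat.cast_sum]
  exact sum_congr rfl fun d hd => card_primitiveHNFWithDiag (pos_of_mem_tuples hd)

theorem count_hnf_primitive_general (n k : ℕ) :
    ({C : Matrix (Fin n) (Fin n) ℤ | IsHermiteNF C ∧ C.det = (k : ℤ) ∧
        ∀ i : Fin n, Finset.univ.gcd (fun j => (C i j).natAbs) = 1}.ncard : ℤ) =
      an' n k := by
  rw [← card_primitiveHNF, ← Set.ncard_coe_finset]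
  congr 2
  ext C
  exact mem_primitiveHNF.symm

theorem count_hnf_primitive (n k : ℕ) (hn : 1 ≤ n) (hk : 0 < k) :
    ({C : Matrix (Fin n) (Fin n) ℤ | IsHermiteNF C ∧ C.det = (k : ℤ) ∧
        ∀ i : Fin n, Finset.univ.gcd (fun j => (C i j).natAbs) = 1}.ncard : ℤ) =
      an' n k :=
  count_hnf_primitive_general n k
end

section
/- With a_n(k) = Σ_{d_1···d_n = k} d_1^0···d_n^{n-1} and a_n'(k) = Σ_{d_1···d_n = k} Π_{i=1}^n Σ_{g|d_i} μ(g)(d_i/g)^{i-1}, the identity a_n'(p^m) = Σ_{i=0}^m (-1)^i C(n,i) a_n(p^{m-i}) holds for every prime p and all m ≥ 0. -/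
open Finset ArithmeticFunction

/-! Both sequences are values of Dirichlet products: `aₙ = N⁰ ∗ N¹ ∗ ⋯ ∗ Nⁿ⁻¹` with `Nⁱ(d) = dⁱ`,
and `aₙ' = ∏ᵢ (μ ∗ Nⁱ) = μⁿ ∗ aₙ`. At a prime power, a Dirichlet product is a Cauchy product
of the sequences of values at `1, p, p², …`; there `μ` is `1, -1, 0, 0, …`, i.e. `1 - X`, so
`μⁿ(pⁱ) = (-1)ⁱ C(n, i)`. -/

open scoped ArithmeticFunction.Moebius

namespace Nat

theorem sum_finMulAntidiag_succ {M : Type*} [AddCommMonoid M] (d k : ℕ)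
    (F : (Fin (d + 1) → ℕ) → M) :
    ∑ a ∈ finMulAntidiag (d + 1) k, F a =
      ∑ x ∈ k.divisorsAntidiagonal, ∑ t ∈ finMulAntidiag d x.2, F (Fin.cons x.1 t) := by
  rw [sum_sigma']
  symm
  refine sum_nbij' (fun x => Fin.cons x.1.1 x.2)
    (fun a => ⟨(a 0, ∏ i : Fin d, a i.succ), Fin.tail a⟩) ?_ ?_ ?_ ?_ (fun _ _ => rfl)
  · rintro ⟨⟨a, b⟩, t⟩ hx
    simp only [mem_sigma, mem_divisorsAntidiagonal, mem_finMulAntidiag] at hx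
    simp [Fin.prod_univ_succ, hx]
  · intro a ha
    rw [mem_finMulAntidiag, Fin.prod_univ_succ] at ha
    simp only [mem_sigma, mem_divisorsAntidiagonal, mem_finMulAntidiag]
    refine ⟨ha, rfl, fun h => ha.2 ?_⟩
    rw [← ha.1, h, mul_zero]
  · rintro ⟨⟨a, b⟩, t⟩ hx
    simp only [mem_sigma, mem_divisorsAntidiagonal, mem_finMulAntidiag] at hx
    simp [hx.2.1]
  · intro a _
    exact Fin.cons_self_tail a

end Nat

namespace ArithmeticFunction

theorem finset_prod_apply {R : Type*} [CommSemiring R] {d : ℕ}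
    (f : Fin d → ArithmeticFunction R) (k : ℕ) :
    (∏ i, f i) k = ∑ a ∈ Nat.finMulAntidiag d k, ∏ i, f i (a i) := by
  induction d generalizing k with
  | zero =>
    rcases eq_or_ne k 1 with rfl | hk
    · simp [Nat.finMulAntidiag_one]
    · simp [Nat.finMulAntidiag_zero_left hk, hk]
  | succ d ih =>
    simp only [Fin.prod_univ_succ, mul_apply, ih, mul_sum,
      Nat.sum_finMulAntidiag_succ, Fin.cons_zero, Fin.cons_succ]

theorem mul_apply_prime_pow {R : Type*} [Semiring R] (f g : ArithmeticFunction R) {p : ℕ}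
    (hp : p.Prime) (m : ℕ) :
    (f * g) (p ^ m) = ∑ i ∈ range (m + 1), f (p ^ i) * g (p ^ (m - i)) := by
  rw [mul_apply, Nat.sum_divisorsAntidiagonal (fun a b => f a * g b),
    Nat.sum_divisors_prime_pow hp]
  refine sum_congr rfl fun i hi => ?_
  rw [Nat.pow_div (by simpa [Nat.lt_succ_iff] using hi) hp.pos]

theorem moebius_pow_apply_prime_pow {p : ℕ} (hp : p.Prime) (n i : ℕ) :
    ((μ : ArithmeticFunction ℤ) ^ n) (p ^ i) = (-1) ^ i * n.choose i := by
  induction n generalizing i with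
  | zero => cases i <;> simp [hp.ne_one]
  | succ n ih =>
    rw [pow_succ', mul_apply_prime_pow _ _ hp]
    cases i with
    | zero => simpa using ih 0
    | succ i =>
      have hμ : ∀ j, (μ : ArithmeticFunction ℤ) (p ^ (j + 2)) = 0 := fun j => by
        simp [moebius_apply_prime_pow hp]
      simp only [sum_range_succ', hμ, zero_mul, sum_const_zero, zero_add, pow_one, pow_zero,
        moebius_apply_prime hp, moebius_apply_one, Nat.sub_zero, Nat.add_sub_cancel, ih,
        Nat.choose_succ_succ]
      push_cast
      ring

end ArithmeticFunction

theorem tuples_eq_finMulAntidiag (n k : ℕ) : tuples n k = Nat.finMulAntidiag n k := by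
  rcases eq_or_ne k 0 with rfl | hk
  · ext d
    simp only [tuples, Nat.divisors_zero, Fintype.mem_piFinset, mem_filter,
      Nat.finMulAntidiag_zero_right, notMem_empty, iff_false, not_and]
    intro h hprod
    obtain ⟨i, -, hi⟩ := prod_eq_zero_iff.mp hprod
    exact h i
  · exact (Nat.finMulAntidiag_eq_piFinset_divisors_filter dvd_rfl hk).symm

theorem an_eq_prod_pow_apply (n k : ℕ) :
    (an n k : ℤ) = (∏ i : Fin n, ((pow i : ArithmeticFunction ℕ) : ArithmeticFunction ℤ)) k := by
  rw [finset_prod_apply, ← tuples_eq_finMulAntidiag, an]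
  push_cast
  refine sum_congr rfl fun d hd => prod_congr rfl fun i _ => ?_
  rw [tuples_eq_finMulAntidiag] at hd
  simp [pow_apply, Nat.ne_zero_of_mem_finMulAntidiag hd i]

theorem moebius_mul_pow_apply (i d : ℕ) :
    ((μ : ArithmeticFunction ℤ) * (pow i : ArithmeticFunction ℕ)) d =
      ∑ g ∈ d.divisors, μ g * ((d / g : ℕ) : ℤ) ^ i := by
  rw [mul_apply, Nat.sum_divisorsAntidiagonal (fun a b =>
    (μ : ArithmeticFunction ℤ) a * ((pow i : ArithmeticFunction ℕ) : ArithmeticFunction ℤ) b)]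
  refine sum_congr rfl fun g hg => ?_
  rw [Nat.mem_divisors] at hg
  have hdg : d / g ≠ 0 :=
    (Nat.div_ne_zero_iff_of_dvd hg.1).mpr ⟨hg.2, ne_zero_of_dvd_ne_zero hg.2 hg.1⟩
  simp [pow_apply, hdg]

theorem an'_eq_prod_apply (n k : ℕ) :
    an' n k = (∏ i : Fin n, (μ : ArithmeticFunction ℤ) * (pow i : ArithmeticFunction ℕ)) k := by
  rw [finset_prod_apply, ← tuples_eq_finMulAntidiag, an']
  simp only [moebius_mul_pow_apply]

theorem an'_inclusion_exclusion_general (n : ℕ) (p : ℕ) (hp : p.Prime) (m : ℕ) :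
    an' n (p ^ m) =
      ∑ i ∈ Finset.range (m + 1), (-1 : ℤ) ^ i * (n.choose i) * (an n (p ^ (m - i)) : ℤ) := by
  rw [an'_eq_prod_apply, prod_mul_distrib, prod_const, card_univ, Fintype.card_fin,
    mul_apply_prime_pow _ _ hp]
  refine sum_congr rfl fun i _ => ?_
  rw [moebius_pow_apply_prime_pow hp, an_eq_prod_pow_apply]

theorem an'_inclusion_exclusion (n : ℕ) (hn : 1 ≤ n) (p : ℕ) (hp : p.Prime) (m : ℕ) :
    an' n (p ^ m) =
      ∑ i ∈ Finset.range (m + 1), (-1 : ℤ) ^ i * (n.choose i) * (an n (p ^ (m - i)) : ℤ) :=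
  an'_inclusion_exclusion_general n p hp m
end

section
/- Let n ≥ 3 be fixed and p a prime. Define D_n(k) = a_n'(k)/a_n(k), where a_n(k) = Σ_{d_1···d_n=k} d_1^0···d_n^{n-1} and a_n'(k) = Σ_{d_1···d_n=k} Π_i Σ_{g|d_i} μ(g)(d_i/g)^{i-1}. Then D_n(p^m) → (1 - 1/p^{n-1})^n as m → ∞. -/
open Finset ArithmeticFunction

/-!
Over a prime power, tuples with product `p ^ m` are `p` raised to exponent tuples summing to `m`,
so `a_n(p^m)` is the `m`-th coefficient of `A = ∏_{i<n} 1/(1 - p^i X)`. The inner Möbius sum has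
generating function `(1 - X)/(1 - p^i X)`, so `a_n'(p^m)` is the `m`-th coefficient of
`(1 - X)^n A`. Rescaling `X` by `p^(n-1)` turns the `m`-th coefficient of `A` into `p^((n-1)m)`
times the `m`-th partial sum of the coefficients of `∏_{i<n-1} 1/(1 - p^(i-n+1) X)`, which converge
to `∏_{i<n-1} 1/(1 - p^(i-n+1)) ≠ 0`. Hence `[X^(m-j)] A / [X^m] A → p^(-(n-1)j)`, and the ratio of
the `m`-th coefficients of `(1 - X)^n A` and `A` tends to `(1 - p^(-(n-1)))^n`.
-/

open PowerSeries Filter Topology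

theorem coeff_coe_mul_eq_sum_range {R : Type*} [CommSemiring R] (P : Polynomial R) (A : R⟦X⟧)
    {m : ℕ} (hm : P.natDegree ≤ m) :
    coeff m ((P : R⟦X⟧) * A) = ∑ i ∈ range (P.natDegree + 1), P.coeff i * coeff (m - i) A := by
  rw [coeff_mul, Nat.sum_antidiagonal_eq_sum_range_succ (fun i j => coeff i (P : R⟦X⟧) * coeff j A)]
  simp only [Polynomial.coeff_coe]
  refine (sum_subset (range_subset_range.2 (by omega)) fun i _ hi => ?_).symm
  rw [Polynomial.coeff_eq_zero_of_natDegree_lt (by simpa using hi), zero_mul]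

theorem tendsto_coeff_coe_mul_div {𝕜 : Type*} [Field 𝕜] [TopologicalSpace 𝕜] [IsTopologicalRing 𝕜]
    (P : Polynomial 𝕜) (A : 𝕜⟦X⟧) {t : 𝕜}
    (h : ∀ j, Tendsto (fun m => coeff (m - j) A / coeff m A) atTop (𝓝 (t ^ j))) :
    Tendsto (fun m => coeff m ((P : 𝕜⟦X⟧) * A) / coeff m A) atTop (𝓝 (P.eval t)) := by
  rw [Polynomial.eval_eq_sum_range]
  refine (tendsto_finsetSum _ fun i _ => (h i).const_mul (P.coeff i)).congr' ?_
  filter_upwards [eventually_ge_atTop P.natDegree] with m hm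
  rw [coeff_coe_mul_eq_sum_range P A hm, sum_div]
  simp only [mul_div_assoc]

theorem summable_norm_coeff_prod_and_tsum_coeff_prod {R : Type*} [NormedCommRing R]
    [CompleteSpace R] {ι : Type*} (s : Finset ι) (f : ι → R⟦X⟧)
    (hf : ∀ i ∈ s, Summable fun l => ‖coeff l (f i)‖) :
    (Summable fun l => ‖coeff l (∏ i ∈ s, f i)‖) ∧
      ∑' l, coeff l (∏ i ∈ s, f i) = ∏ i ∈ s, ∑' l, coeff l (f i) := by
  classical
  induction s using Finset.induction_on with
  | empty =>
    simp only [prod_empty, coeff_one, tsum_ite_eq, and_true]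
    exact summable_of_ne_finset_zero (s := {0}) fun l hl => by simp_all
  | insert a s ha ih =>
    obtain ⟨hs, hsum⟩ := ih fun i hi => hf i (mem_insert_of_mem hi)
    have ha' := hf a (mem_insert_self a s)
    rw [prod_insert ha, prod_insert ha, ← hsum]
    simp only [coeff_mul]
    have h_summable := summable_norm_sum_mul_antidiagonal_of_summable_norm ha' hs
    have h_tsum := tsum_mul_tsum_eq_tsum_sum_antidiagonal_of_summable_norm ha' hs
    exact ⟨h_summable, h_tsum.symm⟩

theorem tendsto_coeff_prod_mk_pow_of_last_eq_one {𝕜 : Type*} [NormedField 𝕜] [CompleteSpace 𝕜]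
    (k : ℕ) (r : Fin (k + 1) → 𝕜) (hr : ∀ i : Fin k, ‖r i.castSucc‖ < 1)
    (hlast : r (Fin.last k) = 1) :
    Tendsto (fun m => coeff m (∏ i, mk fun e => r i ^ e)) atTop
      (𝓝 (∏ i : Fin k, (1 - r i.castSucc)⁻¹)) := by
  set G : 𝕜⟦X⟧ := ∏ i : Fin k, mk fun e => r i.castSucc ^ e
  obtain ⟨hG, hG_tsum⟩ := summable_norm_coeff_prod_and_tsum_coeff_prod univ
    (fun i : Fin k => mk fun e => r i.castSucc ^ e) fun i _ => by
      simpa [norm_pow] using summable_geometric_of_lt_one (norm_nonneg _) (hr i)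
  have hG_sum : HasSum (fun l => coeff l G) (∏ i : Fin k, (1 - r i.castSucc)⁻¹) := by
    simpa only [hG_tsum, coeff_mk, tsum_geometric_of_norm_lt_one (hr _)] using hG.of_norm.hasSum
  have hcoeff (m : ℕ) : coeff m (∏ i, mk fun e => r i ^ e) = ∑ l ∈ range (m + 1), coeff l G := by
    rw [Fin.prod_univ_castSucc, hlast, coeff_mul, Nat.sum_antidiagonal_eq_sum_range_succ
      fun i j => coeff i G * coeff j (mk fun e => (1 : 𝕜) ^ e)]
    simp
  simp_rw [hcoeff]
  exact hG_sum.tendsto_sum_nat.comp (tendsto_add_atTop_nat 1)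

theorem tendsto_pow_mul_div_pow_mul {𝕜 : Type*} [NormedField 𝕜] {F : ℕ → 𝕜} {L c : 𝕜}
    (hF : Tendsto F atTop (𝓝 L)) (hL : L ≠ 0) (hc : c ≠ 0) (j : ℕ) :
    Tendsto (fun m => c ^ (m - j) * F (m - j) / (c ^ m * F m)) atTop (𝓝 (c⁻¹ ^ j)) := by
  have h := ((hF.comp (tendsto_sub_atTop_nat j)).div hF hL).const_mul (c⁻¹ ^ j)
  rw [div_self hL, mul_one] at h
  refine h.congr' ?_
  filter_upwards [eventually_ge_atTop j] with m hm
  rw [mul_div_mul_comm, pow_sub₀ c hc hm, mul_div_cancel_left₀ _ (pow_ne_zero m hc), inv_pow]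
  rfl

theorem tendsto_coeff_prod_mk_pow_ratio {𝕜 : Type*} [NormedField 𝕜] [CompleteSpace 𝕜]
    (k : ℕ) {q : 𝕜} (hq : 1 < ‖q‖) (j : ℕ) :
    Tendsto (fun m => coeff (m - j) (∏ i : Fin (k + 1), mk fun e => (q ^ (i : ℕ)) ^ e) /
        coeff m (∏ i : Fin (k + 1), mk fun e => (q ^ (i : ℕ)) ^ e)) atTop
      (𝓝 ((q ^ k)⁻¹ ^ j)) := by
  have hq0 : q ≠ 0 := norm_pos_iff.1 (one_pos.trans hq)
  set r : Fin (k + 1) → 𝕜 := fun i => q⁻¹ ^ (k - i)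
  have hr (i : Fin k) : ‖r i.castSucc‖ < 1 := by
    rw [norm_pow, norm_inv]
    exact pow_lt_one₀ (by positivity) (inv_lt_one_of_one_lt₀ hq)
      (by simp only [Fin.val_castSucc]; omega)
  have hL : ∏ i : Fin k, (1 - r i.castSucc)⁻¹ ≠ 0 :=
    prod_ne_zero_iff.2 fun i _ => inv_ne_zero <| sub_ne_zero.2 fun h => by simpa [← h] using hr i
  have hqi (i : Fin (k + 1)) : q ^ (i : ℕ) = q ^ k * r i := by
    rw [show r i = (q ^ (k - i))⁻¹ from inv_pow q _, ← pow_sub₀ q hq0 (Nat.sub_le k i),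
      Nat.sub_sub_self (Nat.lt_succ_iff.1 i.isLt)]
  have hA (m : ℕ) : coeff m (∏ i : Fin (k + 1), mk fun e => (q ^ (i : ℕ)) ^ e) =
      (q ^ k) ^ m * coeff m (∏ i, mk fun e => r i ^ e) := by
    simp only [hqi, mul_pow, ← rescale_mk, ← map_prod, coeff_rescale]
  simp_rw [hA]
  exact tendsto_pow_mul_div_pow_mul
    (tendsto_coeff_prod_mk_pow_of_last_eq_one k r hr (by simp [r])) hL (pow_ne_zero k hq0) j

theorem sum_tuples_prime_pow {M : Type*} [AddCommMonoid M] {p : ℕ} (hp : p.Prime) (n m : ℕ)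
    (g : (Fin n → ℕ) → M) :
    ∑ d ∈ tuples n (p ^ m), g d =
      ∑ l ∈ finsuppAntidiag (univ : Finset (Fin n)) m, g (fun i => p ^ l i) := by
  have hpow := Nat.pow_right_injective hp.two_le
  refine (Finset.sum_nbij (fun (l : Fin n →₀ ℕ) i => p ^ l i) ?_ ?_ ?_ fun _ _ => rfl).symm
  · intro l hl
    rw [mem_finsuppAntidiag] at hl
    simp only [tuples, mem_filter, Fintype.mem_piFinset, Nat.mem_divisors]
    refine ⟨fun i => ⟨pow_dvd_pow p ?_, pow_ne_zero _ hp.ne_zero⟩, ?_⟩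
    · exact hl.1 ▸ single_le_sum (fun _ _ => Nat.zero_le _) (mem_univ i)
    · rw [prod_pow_eq_pow_sum, hl.1]
  · intro l _ l' _ h
    exact Finsupp.ext fun i => hpow (congrFun h i)
  · intro d hd
    simp only [coe_filter, Fintype.mem_piFinset, Nat.mem_divisors, tuples] at hd
    choose e he using fun i => (Nat.dvd_prime_pow hp).1 (hd.1 i).1
    refine ⟨Finsupp.equivFunOnFinite.symm e, ?_, funext fun i => (he i).2.symm⟩
    rw [mem_coe, mem_finsuppAntidiag]
    refine ⟨hpow ?_, subset_univ _⟩
    show p ^ _ = p ^ m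
    rw [← hd.2, Finsupp.coe_equivFunOnFinite_symm, ← prod_pow_eq_pow_sum]
    exact prod_congr rfl fun i _ => (he i).2.symm

theorem sum_tuples_prime_pow_prod_eq_coeff {R : Type*} [CommSemiring R] {p : ℕ} (hp : p.Prime)
    (n m : ℕ) (f : Fin n → ℕ → R) :
    ∑ d ∈ tuples n (p ^ m), ∏ i, f i (d i) = coeff m (∏ i, mk fun e => f i (p ^ e)) := by
  simp [sum_tuples_prime_pow hp, coeff_prod]

theorem mk_sum_divisors_prime_pow_moebius_mul {R : Type*} [CommRing R] {p : ℕ} (hp : p.Prime)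
    (h : ℕ → R) :
    mk (fun e => ∑ g ∈ (p ^ e).divisors, (moebius g : R) * h (p ^ e / g)) =
      (1 - X : R⟦X⟧) * mk fun e => h (p ^ e) := by
  ext (_ | e)
  · simp
  · have hμ (k : ℕ) : moebius (p ^ (k + 1 + 1)) = 0 := by simp [moebius_apply_prime_pow hp]
    rw [coeff_mk, Nat.sum_divisors_prime_pow hp, sum_range_succ', sum_range_succ']
    simp only [hμ, Int.cast_zero, zero_mul, sum_const_zero, zero_add, pow_one, pow_zero,
      moebius_apply_prime hp, moebius_apply_one, Nat.div_one, sub_mul, one_mul, map_sub, coeff_mk,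
      coeff_succ_X_mul]
    rw [pow_succ, Nat.mul_div_cancel _ hp.pos]
    push_cast
    ring

theorem an_prime_pow {R : Type*} [CommSemiring R] {p : ℕ} (hp : p.Prime) (n m : ℕ) :
    (an n (p ^ m) : R) = coeff m (∏ i : Fin n, mk fun e => ((p : R) ^ (i : ℕ)) ^ e) := by
  rw [an]
  push_cast
  rw [sum_tuples_prime_pow_prod_eq_coeff hp n m fun i x => (x : R) ^ (i : ℕ)]
  simp only [Nat.cast_pow, pow_right_comm]

theorem an'_prime_pow {R : Type*} [CommRing R] {p : ℕ} (hp : p.Prime) (n m : ℕ) :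
    (an' n (p ^ m) : R) =
      coeff m ((1 - X) ^ n * ∏ i : Fin n, mk fun e => ((p : R) ^ (i : ℕ)) ^ e) := by
  simp only [an', Int.cast_sum, Int.cast_prod, Int.cast_mul, Int.cast_pow, Int.cast_natCast]
  rw [sum_tuples_prime_pow_prod_eq_coeff hp n m
    fun i x => ∑ g ∈ x.divisors, (moebius g : R) * ((x / g : ℕ) : R) ^ (i : ℕ)]
  have h_factor (i : Fin n) :
      (mk fun e => ∑ g ∈ (p ^ e).divisors, (moebius g : R) * ((p ^ e / g : ℕ) : R) ^ (i : ℕ)) =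
        (1 - X : R⟦X⟧) * mk fun e => ((p : R) ^ (i : ℕ)) ^ e := by
    rw [mk_sum_divisors_prime_pow_moebius_mul hp fun x => (x : R) ^ (i : ℕ)]
    simp only [Nat.cast_pow, pow_right_comm]
  simp only [h_factor, prod_mul_distrib, prod_const, card_univ, Fintype.card_fin]

theorem density_limit (n : ℕ) (hn : 3 ≤ n) (p : ℕ) (hp : p.Prime) :
    Filter.Tendsto (fun m : ℕ => (an' n (p ^ m) : ℝ) / (an n (p ^ m) : ℝ))
      Filter.atTop (nhds ((1 - 1 / (p : ℝ) ^ (n - 1)) ^ n)) := by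
  obtain ⟨k, rfl⟩ : ∃ k, n = k + 1 := ⟨n - 1, by omega⟩
  have hp_norm : 1 < ‖(p : ℝ)‖ := by simpa using hp.one_lt
  have h := tendsto_coeff_coe_mul_div ((1 - Polynomial.X) ^ (k + 1)) _
    (tendsto_coeff_prod_mk_pow_ratio k hp_norm)
  simp only [Polynomial.coe_pow, Polynomial.coe_sub, Polynomial.coe_one, Polynomial.coe_X,
    Polynomial.eval_pow, Polynomial.eval_sub, Polynomial.eval_one, Polynomial.eval_X] at h
  simp only [an_prime_pow hp, an'_prime_pow hp, add_tsub_cancel_right, one_div]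
  exact h
end

section
/- For every prime p and m ≥ 1, (p^{2m}(p+1)^2 - p^{m+1})/((p^{m+1}-1)(p^{m+2}-1)) > (p^{2m+2}(p+1)^2 - p^{m+2})/((p^{m+2}-1)(p^{m+3}-1)); that is, D_3(p^m) is strictly decreasing for m ≥ 1. -/
theorem density_three_decreasing (p : ℕ) (hp : p.Prime) (m : ℕ) (hm : 1 ≤ m) :
    ((p : ℝ) ^ (2 * m + 2) * ((p : ℝ) + 1) ^ 2 - (p : ℝ) ^ (m + 2)) /
        (((p : ℝ) ^ (m + 2) - 1) * ((p : ℝ) ^ (m + 3) - 1)) <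
      ((p : ℝ) ^ (2 * m) * ((p : ℝ) + 1) ^ 2 - (p : ℝ) ^ (m + 1)) /
        (((p : ℝ) ^ (m + 1) - 1) * ((p : ℝ) ^ (m + 2) - 1)) := by
  set q : ℝ := (p : ℝ) with hqdef
  have hq : (2:ℝ) ≤ q := by rw [hqdef]; exact_mod_cast hp.two_le
  set x : ℝ := q ^ m with hxdef
  have hx : q ≤ x := by
    calc q = q ^ 1 := (pow_one q).symm
    _ ≤ q ^ m := pow_le_pow_right₀ (by linarith) hm
  have e1 : q ^ (m + 1) = x * q := by rw [pow_add, pow_one]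
  have e2 : q ^ (m + 2) = x * q ^ 2 := by rw [pow_add]
  have e3 : q ^ (m + 3) = x * q ^ 3 := by rw [pow_add]
  have e4 : q ^ (2 * m) = x ^ 2 := by rw [two_mul, pow_add]; ring
  have e5 : q ^ (2 * m + 2) = x ^ 2 * q ^ 2 := by rw [pow_add, e4]
  rw [e1, e2, e3, e4, e5]
  have h1 : (0:ℝ) < x * q - 1 := by nlinarith
  have h2 : (0:ℝ) < x * q ^ 2 - 1 := by nlinarith
  have h3 : (0:ℝ) < x * q ^ 3 - 1 := by nlinarith
  rw [div_lt_div_iff₀ (by positivity) (by positivity)]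
  have hxpos : (0:ℝ) < x := by positivity
  have hA : (0:ℝ) < q - 1 := by linarith
  have hB : (0:ℝ) < x * (3 * q ^ 2 + 3 * q + 1) - q := by nlinarith
  nlinarith [mul_pos (mul_pos h2 (mul_pos hxpos hA)) hB]
end

section
/- Let u, v : N → R be logarithmically concave sequences of positive reals and let w = u ⋆ v be their convolution, w_r = Σ_{j=0}^r u_{r-j} v_j. Then w is a logarithmically concave sequence of positive reals. -/
/-!
For positive `u`, log-concavity says that the ratios `u (n + 1) / u n` decrease. After extending
`u` by zero to `ℤ`, this makes every minor `u (i + 1) * u j - u i * u (j + 1)` with `i ≤ j`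
nonnegative. Both `w (r - 1) * w (r + 1)` and `w r ^ 2` are sums of the form
`(∑ a₁ b₂) * (∑ a₂ b₁)` and `(∑ a₁ b₁) * (∑ a₂ b₂)` over the same index range, and by the
Cauchy–Binet formula twice their difference is a sum of products of a minor of `u` with a minor
of `v`, each nonnegative.
-/

/-- Discrete convolution of two sequences. -/
def conv (u v : ℕ → ℝ) : ℕ → ℝ := fun r => ∑ j ∈ Finset.range (r + 1), u (r - j) * v j

open Finset

section CauchyBinet

variable {R ι : Type*} [CommRing R]

/-- The Cauchy–Binet formula for `2 × 2` minors. -/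
theorem two_mul_sub_sum_mul_sum_eq_sum_sum_minors (s : Finset ι) (a₁ a₂ b₁ b₂ : ι → R) :
    2 * ((∑ i ∈ s, a₁ i * b₁ i) * (∑ i ∈ s, a₂ i * b₂ i)
        - (∑ i ∈ s, a₁ i * b₂ i) * (∑ i ∈ s, a₂ i * b₁ i)) =
      ∑ i ∈ s, ∑ j ∈ s, (a₁ i * a₂ j - a₁ j * a₂ i) * (b₁ i * b₂ j - b₁ j * b₂ i) := by
  have expand : ∀ i j, (a₁ i * a₂ j - a₁ j * a₂ i) * (b₁ i * b₂ j - b₁ j * b₂ i) =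
      a₁ i * b₁ i * (a₂ j * b₂ j) + a₁ j * b₁ j * (a₂ i * b₂ i)
        - (a₁ i * b₂ i * (a₂ j * b₁ j) + a₁ j * b₂ j * (a₂ i * b₁ i)) :=
    fun i j => by ring
  simp only [expand, sum_sub_distrib, sum_add_distrib]
  rw [sum_comm (f := fun i j => a₁ j * b₁ j * (a₂ i * b₂ i)),
    sum_comm (f := fun i j => a₁ j * b₂ j * (a₂ i * b₁ i)), sum_mul_sum, sum_mul_sum]
  ring

variable [LinearOrder R] [IsStrictOrderedRing R] [LinearOrder ι]

theorem sum_mul_sum_le_sum_mul_sum_of_minors_nonneg (s : Finset ι) (a₁ a₂ b₁ b₂ : ι → R)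
    (ha : ∀ i ∈ s, ∀ j ∈ s, i ≤ j → a₁ j * a₂ i ≤ a₁ i * a₂ j)
    (hb : ∀ i ∈ s, ∀ j ∈ s, i ≤ j → b₁ j * b₂ i ≤ b₁ i * b₂ j) :
    (∑ i ∈ s, a₁ i * b₂ i) * (∑ i ∈ s, a₂ i * b₁ i) ≤
      (∑ i ∈ s, a₁ i * b₁ i) * (∑ i ∈ s, a₂ i * b₂ i) := by
  have hsum : 0 ≤ ∑ i ∈ s, ∑ j ∈ s, (a₁ i * a₂ j - a₁ j * a₂ i) * (b₁ i * b₂ j - b₁ j * b₂ i) :=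
    sum_nonneg fun i hi => sum_nonneg fun j hj => by
      rcases le_total i j with hij | hji
      · exact mul_nonneg (sub_nonneg.2 (ha i hi j hj hij)) (sub_nonneg.2 (hb i hi j hj hij))
      · exact mul_nonneg_of_nonpos_of_nonpos (sub_nonpos.2 (ha j hj i hi hji))
          (sub_nonpos.2 (hb j hj i hi hji))
  rw [← two_mul_sub_sum_mul_sum_eq_sum_sum_minors,
    mul_nonneg_iff_of_pos_left two_pos] at hsum
  exact sub_nonneg.1 hsum

end CauchyBinet

section LogConcave

variable {u : ℕ → ℝ}

theorem antitone_succ_div_of_log_concave (hu : ∀ r, 0 < u r)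
    (hlc : ∀ r : ℕ, 1 ≤ r → u (r - 1) * u (r + 1) ≤ u r ^ 2) :
    Antitone fun n => u (n + 1) / u n :=
  antitone_nat_of_succ_le fun n => by
    rw [div_le_div_iff₀ (hu _) (hu _), mul_comm, ← sq]
    simpa using hlc (n + 1) (by omega)

def extendByZero (u : ℕ → ℝ) (k : ℤ) : ℝ := if 0 ≤ k then u k.toNat else 0

@[simp]
theorem extendByZero_natCast (n : ℕ) : extendByZero u n = u n := by
  simp [extendByZero]

theorem extendByZero_of_neg {k : ℤ} (hk : k < 0) : extendByZero u k = 0 :=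
  if_neg (not_le.2 hk)

theorem extendByZero_nonneg (hu : ∀ r, 0 ≤ u r) (k : ℤ) : 0 ≤ extendByZero u k := by
  unfold extendByZero
  split_ifs
  exacts [hu _, le_rfl]

theorem extendByZero_mul_le (hu : ∀ r, 0 < u r)
    (hlc : ∀ r : ℕ, 1 ≤ r → u (r - 1) * u (r + 1) ≤ u r ^ 2) {i j : ℤ} (hij : i ≤ j) :
    extendByZero u i * extendByZero u (j + 1) ≤ extendByZero u (i + 1) * extendByZero u j := by
  have hu' r := (hu r).le
  rcases lt_or_ge i 0 with hi | hi
  · rw [extendByZero_of_neg hi, zero_mul]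
    exact mul_nonneg (extendByZero_nonneg hu' _) (extendByZero_nonneg hu' _)
  lift j to ℕ using hi.trans hij
  lift i to ℕ using hi
  have hratio := antitone_succ_div_of_log_concave hu hlc (Int.ofNat_le.1 hij)
  rw [div_le_div_iff₀ (hu _) (hu _)] at hratio
  rw [← Nat.cast_succ, ← Nat.cast_succ]
  simp only [extendByZero_natCast]
  linarith

end LogConcave

theorem conv_eq_sum_range_extendByZero (u v : ℕ → ℝ) (n N : ℕ) (a b : ℤ) (hab : a - b = n)
    (hb : 0 ≤ b) (hN : a < N) :
    conv u v n = ∑ k ∈ range N, extendByZero u (a - k) * extendByZero v (k - b) := by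
  lift b to ℕ using hb
  obtain ⟨d, rfl⟩ : ∃ d, N = b + (n + 1) + d := ⟨N - (b + (n + 1)), by omega⟩
  rw [sum_range_add, sum_range_add, sum_eq_zero, sum_eq_zero (s := range d), zero_add, add_zero]
  · refine sum_congr rfl fun j hj => ?_
    have hjn : j ≤ n := Nat.lt_succ_iff.1 (mem_range.1 hj)
    rw [show a - ↑(b + j) = ↑(n - j) by omega, show (↑(b + j) : ℤ) - b = j by omega]
    simp only [extendByZero_natCast]
  · exact fun k _ => mul_eq_zero_of_left (extendByZero_of_neg (by omega)) _
  · exact fun k hk => mul_eq_zero_of_right _ (extendByZero_of_neg (by rw [mem_range] at hk; omega))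

theorem conv_log_concave (u v : ℕ → ℝ) (hu : ∀ r, 0 < u r) (hv : ∀ r, 0 < v r)
    (hulc : ∀ r : ℕ, 1 ≤ r → u (r - 1) * u (r + 1) ≤ u r ^ 2)
    (hvlc : ∀ r : ℕ, 1 ≤ r → v (r - 1) * v (r + 1) ≤ v r ^ 2) :
    (∀ r, 0 < conv u v r) ∧
    (∀ r : ℕ, 1 ≤ r → conv u v (r - 1) * conv u v (r + 1) ≤ conv u v r ^ 2) := by
  refine ⟨fun r => sum_pos (fun j _ => mul_pos (hu _) (hv _)) nonempty_range_add_one,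
    fun r hr => ?_⟩
  have key := sum_mul_sum_le_sum_mul_sum_of_minors_nonneg (range (r + 2))
    (fun k : ℕ => extendByZero u (r - k)) (fun k : ℕ => extendByZero u (r + 1 - k))
    (fun k : ℕ => extendByZero v k) (fun k : ℕ => extendByZero v (k - 1))
    (fun i _ j _ hij => by
      have := extendByZero_mul_le hu hulc (i := r - j) (j := r - i) (by omega)
      rw [sub_add_eq_add_sub, sub_add_eq_add_sub] at this
      linarith)
    (fun i _ j _ hij => by
      have := extendByZero_mul_le hv hvlc (i := i - 1) (j := j - 1) (by omega)
      rw [sub_add_cancel, sub_add_cancel] at this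
      linarith)
  have hw (n : ℕ) (a b : ℤ) (hab : a - b = n) (hb : 0 ≤ b) (ha : a ≤ r + 1) :=
    conv_eq_sum_range_extendByZero u v n (r + 2) a b hab hb (by omega)
  calc conv u v (r - 1) * conv u v (r + 1)
      = _ * _ := congrArg₂ (· * ·) (hw (r - 1) r 1 (by omega) zero_le_one (by omega))
          (by simpa only [sub_zero] using hw (r + 1) (r + 1) 0 (by omega) le_rfl le_rfl)
    _ ≤ _ := key
    _ = conv u v r * conv u v r := congrArg₂ (· * ·)
          (by simpa only [sub_zero] using (hw r r 0 (by omega) le_rfl (by omega)).symm)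
          (hw r (r + 1) 1 (by omega) zero_le_one le_rfl).symm
    _ = conv u v r ^ 2 := (sq _).symm
end

section
/- Fix a prime p and j ≥ 1, and let u = M ⋆ P_0, v = M ⋆ P_j where M = (1,-1,0,0,...) and P_i(r) = p^{ir}. Then w = u ⋆ v is not logarithmically concave: w_1^2 - w_0 w_2 < 0. -/
/-- The sequence (1, -1, 0, 0, ...). -/
def M : ℕ → ℝ := fun r => if r = 0 then 1 else if r = 1 then -1 else 0

/-- The geometric sequence r ↦ p^{i r}. -/
def P (p i : ℕ) : ℕ → ℝ := fun r => (p : ℝ) ^ (i * r)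

open Finset

lemma conv_M_zero (a : ℕ → ℝ) : conv M a 0 = a 0 := by
  simp [conv, M]

lemma conv_M_succ (a : ℕ → ℝ) (r : ℕ) : conv M a (r + 1) = a (r + 1) - a r := by
  have hvanish : ∑ s ∈ range r, M (r + 1 - s) * a s = 0 :=
    sum_eq_zero fun s hs => by
      have hs' : r + 1 - s ≠ 0 ∧ r + 1 - s ≠ 1 := by
        rw [mem_range] at hs
        omega
      simp [M, hs']
  rw [conv, sum_range_succ, sum_range_succ, hvanish]
  simp only [M, add_tsub_cancel_left, one_ne_zero, ↓reduceIte, neg_mul, one_mul, zero_add,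
    tsub_self]
  ring

lemma conv_M_const_one : conv M (fun _ => 1) = Pi.single 0 1 := by
  funext r
  cases r with
  | zero => simp [conv_M_zero]
  | succ r => simp [conv_M_succ]

lemma conv_single_zero_one (v : ℕ → ℝ) : conv (Pi.single 0 1) v = v := by
  funext r
  rw [conv, sum_eq_single r]
  · simp
  · intro s hs hsr
    have : r - s ≠ 0 := by
      rw [mem_range] at hs
      omega
    simp [this]
  · simp

lemma sq_sub_mul_conv_M_pow (q : ℝ) :
    conv M (q ^ ·) 1 ^ 2 - conv M (q ^ ·) 0 * conv M (q ^ ·) 2 = 1 - q := by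
  rw [conv_M_succ, conv_M_zero, conv_M_succ]
  ring

lemma P_zero (p : ℕ) : P p 0 = fun _ => 1 := by
  funext r
  simp [P]

lemma P_eq_pow (p i : ℕ) : P p i = (((p : ℝ) ^ i) ^ ·) := by
  funext r
  simp [P, pow_mul]

theorem MP0_conv_MPj_not_log_concave (p j : ℕ) (hp : p.Prime) (hj : 1 ≤ j) :
    conv (conv M (P p 0)) (conv M (P p j)) 1 ^ 2 -
        conv (conv M (P p 0)) (conv M (P p j)) 0 *
          conv (conv M (P p 0)) (conv M (P p j)) 2 < 0 := by
  have hq : 1 < (p : ℝ) ^ j := one_lt_pow₀ (by exact_mod_cast hp.one_lt) (by omega)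
  rw [P_zero, conv_M_const_one, conv_single_zero_one, P_eq_pow, sq_sub_mul_conv_M_pow]
  linarith
end

section
/- For all n ≥ 6, the inequality 1/((1 - 2^{-(n-1)})^n ζ(n-1)^n) > 1 - n/(2^n - 1) holds, where ζ is the Riemann zeta function. -/
open Finset

/-!
Write `m = n - 1`. Splitting off the terms `1`, `2⁻ᵐ`, `3⁻ᵐ` of `ζ(m)` and bounding the rest by
`∑_{k ≥ 4} k⁻ᵐ ≤ 4^{2-m} ∑_{k ≥ 4} k⁻² ≤ 4^{2-m} / 2` gives `ζ(m) ≤ 1 + 2⁻ᵐ + ε` with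
`ε = 3⁻ᵐ + 2 · 4^{1-m}`, hence `B := (1 - 2⁻ᵐ) ζ(m) ≤ 1 + ε`. For `m ≥ 5` one has `2ⁿ ε < 1`, so
`n ε < n / (2ⁿ - 1)`, and Bernoulli's inequality gives
`Bⁿ (1 - n ε) ≤ (1 + ε)ⁿ (1 - ε)ⁿ ≤ 1`.
-/

lemma summable_one_div_nat_add_pow (a : ℕ) {p : ℕ} (hp : 1 < p) :
    Summable fun k : ℕ => (1 : ℝ) / ((k : ℝ) + a) ^ p := by
  simpa using (summable_nat_add_iff a).mpr (Real.summable_one_div_nat_pow.mpr hp)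

lemma tsum_one_div_nat_add_sq_le (j : ℕ) :
    ∑' k : ℕ, (1 : ℝ) / ((k : ℝ) + (j + 1)) ^ 2 ≤ 2 / ((j : ℝ) + 1) := by
  refine Real.tsum_le_of_sum_range_le (fun _ => by positivity) fun N => ?_
  calc ∑ k ∈ range N, (1 : ℝ) / ((k : ℝ) + (j + 1)) ^ 2
      = ∑ i ∈ Ioo j (j + 1 + N), ((i : ℝ) ^ 2)⁻¹ := by
        rw [← Ico_add_one_left_eq_Ioo, sum_Ico_eq_sum_range, Nat.add_sub_cancel_left]
        refine sum_congr rfl fun k _ => ?_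
        push_cast
        ring
    _ ≤ 2 / (j + 1) := sum_Ioo_inv_sq_le j _

lemma tsum_one_div_nat_add_pow_le (j p : ℕ) :
    ∑' k : ℕ, (1 : ℝ) / ((k : ℝ) + (j + 1)) ^ (p + 2) ≤ 2 / ((j : ℝ) + 1) ^ (p + 1) := by
  have hsq : Summable fun k : ℕ => (1 : ℝ) / ((k : ℝ) + (j + 1)) ^ 2 := by
    exact_mod_cast summable_one_div_nat_add_pow (j + 1) one_lt_two
  have hterm (k : ℕ) : (1 : ℝ) / ((k : ℝ) + (j + 1)) ^ (p + 2)
      ≤ 1 / ((j : ℝ) + 1) ^ p * (1 / ((k : ℝ) + (j + 1)) ^ 2) := by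
    have hjk : (j : ℝ) + 1 ≤ k + (j + 1) := le_add_of_nonneg_left k.cast_nonneg
    rw [pow_add, one_div_mul_one_div]
    gcongr
  calc ∑' k : ℕ, (1 : ℝ) / ((k : ℝ) + (j + 1)) ^ (p + 2)
      ≤ ∑' k : ℕ, 1 / ((j : ℝ) + 1) ^ p * (1 / ((k : ℝ) + (j + 1)) ^ 2) := by
        refine Summable.tsum_le_tsum hterm ?_ (hsq.mul_left _)
        exact_mod_cast summable_one_div_nat_add_pow (j + 1) (by omega)
    _ = 1 / ((j : ℝ) + 1) ^ p * ∑' k : ℕ, 1 / ((k : ℝ) + (j + 1)) ^ 2 := tsum_mul_left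
    _ ≤ 1 / ((j : ℝ) + 1) ^ p * (2 / (j + 1)) := by gcongr; exact tsum_one_div_nat_add_sq_le j
    _ = 2 / (j + 1) ^ (p + 1) := by rw [pow_succ]; field_simp

lemma tsum_one_div_nat_add_one_pow_eq {m : ℕ} (hm : 1 < m) :
    ∑' k : ℕ, (1 : ℝ) / ((k : ℝ) + 1) ^ m
      = 1 + 1 / 2 ^ m + 1 / 3 ^ m + ∑' k : ℕ, (1 : ℝ) / ((k : ℝ) + 4) ^ m := by
  have hsum : Summable fun k : ℕ => (1 : ℝ) / ((k : ℝ) + 1) ^ m := by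
    exact_mod_cast summable_one_div_nat_add_pow 1 hm
  rw [← hsum.sum_add_tsum_nat_add 3]
  simp only [sum_range_succ, sum_range_zero]
  push_cast
  norm_num [add_assoc]

lemma tsum_one_div_nat_add_one_pow_le (p : ℕ) :
    ∑' k : ℕ, (1 : ℝ) / ((k : ℝ) + 1) ^ (p + 2)
      ≤ 1 + 1 / 2 ^ (p + 2) + (1 / 3 ^ (p + 2) + 2 / 4 ^ (p + 1)) := by
  have htail : ∑' k : ℕ, (1 : ℝ) / ((k : ℝ) + 4) ^ (p + 2) ≤ 2 / 4 ^ (p + 1) := by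
    convert tsum_one_div_nat_add_pow_le 3 p using 4 <;> norm_num
  rw [tsum_one_div_nat_add_one_pow_eq (by omega)]
  linarith

lemma two_pow_mul_inv_three_pow_add_inv_four_pow_lt_one {p : ℕ} (hp : 3 ≤ p) :
    (2 : ℝ) ^ (p + 3) * (1 / 3 ^ (p + 2) + 2 / 4 ^ (p + 1)) < 1 := by
  have h₁ : (2 / 3 : ℝ) ^ p ≤ (2 / 3) ^ 3 := pow_le_pow_of_le_one (by norm_num) (by norm_num) hp
  have h₂ : (1 / 2 : ℝ) ^ p ≤ (1 / 2) ^ 3 := pow_le_pow_of_le_one (by norm_num) (by norm_num) hp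
  have heq : (2 : ℝ) ^ (p + 3) * (1 / 3 ^ (p + 2) + 2 / 4 ^ (p + 1))
      = 8 / 9 * (2 / 3) ^ p + 4 * (1 / 2) ^ p := by
    rw [div_pow, div_pow, show (4 : ℝ) = 2 ^ 2 by norm_num, ← pow_mul]
    field_simp
    ring
  rw [heq]
  norm_num at h₁ h₂ ⊢
  linarith

lemma pow_mul_one_sub_lt_one {n : ℕ} {B ε δ : ℝ} (hB₀ : 0 ≤ B) (hB : B ≤ 1 + ε)
    (hε₀ : 0 ≤ ε) (hε₁ : ε ≤ 1) (hδ : n * ε < δ) : B ^ n * (1 - δ) < 1 := by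
  rcases le_or_gt δ 1 with hδ₁ | hδ₁
  · have hbernoulli : 1 - n * ε ≤ (1 - ε) ^ n := by
      simpa [← sub_eq_add_neg] using one_add_mul_le_pow (a := -ε) (by linarith) n
    calc B ^ n * (1 - δ) ≤ (1 + ε) ^ n * (1 - δ) := by gcongr
      _ < (1 + ε) ^ n * (1 - n * ε) := by gcongr
      _ ≤ (1 + ε) ^ n * (1 - ε) ^ n := by gcongr
      _ = (1 - ε ^ 2) ^ n := by rw [← mul_pow]; ring
      _ ≤ 1 := pow_le_one₀ (by nlinarith) (by nlinarith)
  · nlinarith [pow_nonneg hB₀ n]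

theorem density_gap_inequality (n : ℕ) (hn : 6 ≤ n) :
    1 - (n : ℝ) / (2 ^ n - 1) <
      1 / ((1 - 1 / (2 : ℝ) ^ (n - 1)) ^ n *
        (∑' k : ℕ, (1 : ℝ) / ((k : ℝ) + 1) ^ (n - 1)) ^ n) := by
  obtain ⟨p, rfl⟩ : ∃ p, n = p + 3 := ⟨n - 3, by omega⟩
  simp only [show p + 3 - 1 = p + 2 by omega]
  set S := ∑' k : ℕ, (1 : ℝ) / ((k : ℝ) + 1) ^ (p + 2)
  set a : ℝ := 1 / 2 ^ (p + 2)
  set ε : ℝ := 1 / 3 ^ (p + 2) + 2 / 4 ^ (p + 1)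
  have hS : S ≤ 1 + a + ε := tsum_one_div_nat_add_one_pow_le p
  have hS₁ : 1 ≤ S := by
    have hsum : Summable fun k : ℕ => (1 : ℝ) / ((k : ℝ) + 1) ^ (p + 2) := by
      exact_mod_cast summable_one_div_nat_add_pow 1 (by omega)
    refine (by norm_num : (1 : ℝ) = 1 / (((0 : ℕ) : ℝ) + 1) ^ (p + 2)).trans_le ?_
    exact hsum.le_tsum 0 (fun _ _ => by positivity)
  have hε : 2 ^ (p + 3) * ε < 1 := two_pow_mul_inv_three_pow_add_inv_four_pow_lt_one (by omega)
  have ha₀ : 0 < a := by positivity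
  have ha₁ : a < 1 := (div_lt_one (by positivity)).2 (one_lt_pow₀ one_lt_two (by omega))
  have hε₀ : 0 < ε := by positivity
  have hB₀ : 0 < (1 - a) * S := by nlinarith
  have hB : (1 - a) * S ≤ 1 + ε := by nlinarith
  have h2 : (1 : ℝ) < 2 ^ (p + 3) := one_lt_pow₀ one_lt_two (by omega)
  have hδ : ((p + 3 : ℕ) : ℝ) * ε < (p + 3 : ℕ) / (2 ^ (p + 3) - 1) := by
    have hn₀ : (0 : ℝ) < (p + 3 : ℕ) := by positivity
    rw [lt_div_iff₀ (by linarith)]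
    nlinarith [mul_pos hn₀ (sub_pos.2 hε)]
  rw [← mul_pow, lt_div_iff₀ (by positivity), mul_comm]
  exact pow_mul_one_sub_lt_one hB₀.le hB hε₀.le (by nlinarith) hδ
end
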